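/- The constrained quantization dimension D(P) = lim_{n→∞} 2 log n / (−log(Vₙ − V_∞)) exists and equals 1, for the uniform distribution on [0,2] with constraint the two slanted sides of the equilateral triangle O(0,0), A(2,0), B(1,√3). -/

import Mathlib

open scoped Classical

/-- Distortion error of a finite set w.r.t. the uniform distribution on the base `[0,2]`,
using the squared Euclidean distance `rho((x,0),(a,b)) = (x-a)^2 + b^2`. -/
noncomputable def distortion (α : Finset (ℝ × ℝ)) : ℝ :=
  (1/2) * ∫ x in (0:ℝ)..2, sInf ((fun p : ℝ × ℝ => (x - p.1)^2 + p.2^2) '' (α : Set (ℝ × ℝ)))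

/-- The side `OB` of the equilateral triangle `O(0,0)`, `A(2,0)`, `B(1,√3)`. -/
def S1 : Set (ℝ × ℝ) := {p | ∃ x : ℝ, 0 ≤ x ∧ x ≤ 1 ∧ p = (x, Real.sqrt 3 * x)}

/-- The side `AB` of the equilateral triangle. -/
def S2 : Set (ℝ × ℝ) := {p | ∃ x : ℝ, 1 ≤ x ∧ x ≤ 2 ∧ p = (x, -(Real.sqrt 3) * (x - 2))}

/-- The `n`-th constrained quantization error with constraint `S1 ∪ S2`. -/
noncomputable def V (n : ℕ) : ℝ :=
  sInf {v | ∃ α : Finset (ℝ × ℝ), ↑α ⊆ S1 ∪ S2 ∧ 1 ≤ α.card ∧ α.card ≤ n ∧ v = distortion α}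

/-!
For a point of either side, the squared distance from `(x, 0)` splits (Pythagoras) into the
squared distance `3/4 x²` or `3/4 (2 - x)²` to the line carrying that side plus a quarter of the
squared offset along it. Integrating the first part gives `1/4`, a lower bound for every
distortion, and the excess is a one-dimensional quantization error: `k` evenly spaced points on
each side leave an excess `O(1/k²)`, while by Markov's inequality `n` points leave a subset of
`[0, 1/2]` of measure `1/4` at distance `≥ 1/(8n)` from all their projections, forcing an excess
`≳ 1/n²`. Thus `Vₙ - 1/4 ≍ 1/n²`, and both limits follow.
-/

open MeasureTheory Set Filter Topology

lemma mul_sub_le_integral_of_le_off_balls {f : ℝ → ℝ} {a b ε r : ℝ} (B : Finset ℝ)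
    (hab : a ≤ b) (hε : 0 ≤ ε) (hr : 0 ≤ r) (hf : IntervalIntegrable f volume a b)
    (hf₀ : ∀ x ∈ Ioc a b, 0 ≤ f x)
    (hfar : ∀ x ∈ Ioc a b, (∀ β ∈ B, r ≤ |x - β|) → ε ≤ f x) :
    ε * (b - a - 2 * r * B.card) ≤ ∫ x in a..b, f x := by
  set μ := volume.restrict (Ioc a b)
  have hcover : Ioc a b ⊆ {x | ε ≤ f x} ∪ ⋃ β ∈ B, Metric.ball β r := by
    intro x hx
    by_cases h : ∀ β ∈ B, r ≤ |x - β|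
    · exact Or.inl (hfar x hx h)
    · push Not at h
      obtain ⟨β, hβ, hxβ⟩ := h
      exact Or.inr (mem_biUnion hβ (by rwa [Metric.mem_ball, Real.dist_eq]))
  have hballs : μ.real (⋃ β ∈ B, Metric.ball β r) ≤ 2 * r * B.card := by
    calc μ.real (⋃ β ∈ B, Metric.ball β r) ≤ ∑ β ∈ B, μ.real (Metric.ball β r) :=
          measureReal_biUnion_finset_le _ _
      _ ≤ ∑ β ∈ B, volume.real (Metric.ball β r) := by
          gcongr with β
          rw [measureReal_restrict_apply measurableSet_ball]
          exact measureReal_mono inter_subset_left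
      _ = 2 * r * B.card := by simp [Real.volume_real_ball hr, mul_comm]
  have hlarge : b - a - 2 * r * B.card ≤ μ.real {x | ε ≤ f x} := by
    have : μ.real (Ioc a b) ≤ μ.real {x | ε ≤ f x} + μ.real (⋃ β ∈ B, Metric.ball β r) :=
      (measureReal_mono hcover).trans (measureReal_union_le _ _)
    rw [measureReal_restrict_apply_self, Real.volume_real_Ioc_of_le hab] at this
    linarith
  have hmarkov := mul_meas_ge_le_integral_of_nonneg
    ((ae_restrict_iff' measurableSet_Ioc).2 (Filter.Eventually.of_forall hf₀)) hf.1 ε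
  rw [intervalIntegral.integral_of_le hab]
  exact (mul_le_mul_of_nonneg_left hlarge hε).trans hmarkov

lemma exists_lt_abs_mul_sub_le {k : ℕ} (hk : 1 ≤ k) {y : ℝ} (hy₀ : 0 ≤ y) (hy₁ : y ≤ 1) :
    ∃ i < k, |k * y - (i + 1/2)| ≤ 1/2 := by
  refine ⟨min ⌊k * y⌋₊ (k - 1), by omega, ?_⟩
  have hlow : ((min ⌊k * y⌋₊ (k - 1) : ℕ) : ℝ) ≤ k * y :=
    (Nat.cast_le.2 (min_le_left _ _)).trans (Nat.floor_le (by positivity))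
  have hup : k * y ≤ ((min ⌊k * y⌋₊ (k - 1) : ℕ) : ℝ) + 1 := by
    rcases le_total ⌊k * y⌋₊ (k - 1) with h | h
    · rw [min_eq_left h]; exact (Nat.lt_floor_add_one _).le
    · rw [min_eq_right h, Nat.cast_sub hk, Nat.cast_one, sub_add_cancel]
      nlinarith
  rw [abs_le]; constructor <;> linarith

lemma tendsto_one_sub_div_two_mul_log (K : ℝ) :
    Tendsto (fun n : ℕ => 1 - K / (2 * Real.log n)) atTop (𝓝 1) := by
  have : Tendsto (fun n : ℕ => K / (2 * Real.log n)) atTop (𝓝 0) :=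
    tendsto_const_nhds.div_atTop
      ((Real.tendsto_log_atTop.comp tendsto_natCast_atTop_atTop).const_mul_atTop two_pos)
  simpa using tendsto_const_nhds.sub this

lemma tendsto_of_mem_Icc_div_sq {u : ℕ → ℝ} {c C : ℝ}
    (hu : ∀ᶠ n : ℕ in atTop, u n ∈ Icc (c / (n:ℝ)^2) (C / (n:ℝ)^2)) : Tendsto u atTop (𝓝 0) := by
  have hsq : ∀ a : ℝ, Tendsto (fun n : ℕ => a / (n:ℝ)^2) atTop (𝓝 0) := fun a =>
    tendsto_const_nhds.div_atTop ((tendsto_pow_atTop two_ne_zero).comp tendsto_natCast_atTop_atTop)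
  exact tendsto_of_tendsto_of_tendsto_of_le_of_le' (hsq c) (hsq C)
    (hu.mono fun _ h => h.1) (hu.mono fun _ h => h.2)

lemma tendsto_two_mul_log_div_neg_log {u : ℕ → ℝ} {c C : ℝ} (hc : 0 < c)
    (hu : ∀ᶠ n : ℕ in atTop, u n ∈ Icc (c / (n:ℝ)^2) (C / (n:ℝ)^2)) :
    Tendsto (fun n : ℕ => 2 * Real.log n / (-Real.log (u n))) atTop (𝓝 1) := by
  have hbounds : ∀ᶠ n : ℕ in atTop, -Real.log (u n) / (2 * Real.log n)
      ∈ Icc (1 - Real.log C / (2 * Real.log n)) (1 - Real.log c / (2 * Real.log n)) := by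
    filter_upwards [hu, eventually_ge_atTop 2] with n ⟨hlow, hup⟩ hn
    have hn₀ : (0:ℝ) < n := by positivity
    have hL : 0 < 2 * Real.log n := by
      have : (1:ℝ) < n := by exact_mod_cast hn
      linarith [Real.log_pos this]
    have hu₀ : 0 < u n := (by positivity : 0 < c / (n:ℝ)^2).trans_le hlow
    have hC : 0 < C := by
      have := hu₀.trans_le hup
      rwa [div_pos_iff_of_pos_right (by positivity)] at this
    have hlog : ∀ a : ℝ, 0 < a → Real.log (a / (n:ℝ)^2) = Real.log a - 2 * Real.log n := by
      intro a ha
      rw [Real.log_div ha.ne' (by positivity), Real.log_pow]; push_cast; ring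
    have h₁ := Real.log_le_log (by positivity) hlow
    have h₂ := Real.log_le_log hu₀ hup
    rw [hlog c hc] at h₁
    rw [hlog C hC] at h₂
    constructor
    · rw [le_div_iff₀ hL, sub_mul, one_mul, div_mul_cancel₀ _ hL.ne']; linarith
    · rw [div_le_iff₀ hL, sub_mul, one_mul, div_mul_cancel₀ _ hL.ne']; linarith
  have hratio : Tendsto (fun n : ℕ => -Real.log (u n) / (2 * Real.log n)) atTop (𝓝 1) :=
    tendsto_of_tendsto_of_tendsto_of_le_of_le' (tendsto_one_sub_div_two_mul_log _)
      (tendsto_one_sub_div_two_mul_log _) (hbounds.mono fun _ h => h.1)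
      (hbounds.mono fun _ h => h.2)
  simpa using hratio.inv₀ one_ne_zero

noncomputable def minSqDist (α : Finset (ℝ × ℝ)) (x : ℝ) : ℝ :=
  sInf ((fun p : ℝ × ℝ => (x - p.1)^2 + p.2^2) '' (α : Set (ℝ × ℝ)))

lemma distortion_eq_integral_minSqDist (α : Finset (ℝ × ℝ)) :
    distortion α = (1/2) * ∫ x in (0:ℝ)..2, minSqDist α x := rfl

lemma minSqDist_eq_inf' {α : Finset (ℝ × ℝ)} (hα : α.Nonempty) (x : ℝ) :
    minSqDist α x = α.inf' hα (fun p => (x - p.1)^2 + p.2^2) := by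
  rw [Finset.inf'_eq_csInf_image]; rfl

lemma continuous_minSqDist {α : Finset (ℝ × ℝ)} (hα : α.Nonempty) :
    Continuous (minSqDist α) := by
  simp_rw [funext (minSqDist_eq_inf' hα)]
  exact Continuous.finset_inf'_apply hα (fun p _ => by fun_prop)

/-- `(√3/2)|x|` and `(√3/2)|2 - x|` are the distances from `(x, 0)` to the lines carrying
`S1` and `S2`. -/
noncomputable def sqDistToSides (x : ℝ) : ℝ := 3/4 * min (x^2) ((2 - x)^2)

lemma continuous_sqDistToSides : Continuous sqDistToSides := by
  unfold sqDistToSides; fun_prop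

lemma sqDistToSides_of_le_one {x : ℝ} (hx : x ≤ 1) : sqDistToSides x = 3/4 * x^2 := by
  rw [sqDistToSides, min_eq_left (by nlinarith)]

lemma sqDistToSides_of_one_le {x : ℝ} (hx : 1 ≤ x) : sqDistToSides x = 3/4 * (2 - x)^2 := by
  rw [sqDistToSides, min_eq_right (by nlinarith)]

lemma integral_sqDistToSides : ∫ x in (0:ℝ)..2, sqDistToSides x = 1/2 := by
  have hleft : ∫ x in (0:ℝ)..1, sqDistToSides x = 1/4 := by
    rw [intervalIntegral.integral_congr (g := fun x => 3/4 * x^2)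
      fun x hx => sqDistToSides_of_le_one (by rw [uIcc_of_le zero_le_one] at hx; exact hx.2)]
    norm_num [integral_pow]
  have hright : ∫ x in (1:ℝ)..2, sqDistToSides x = 1/4 := by
    rw [intervalIntegral.integral_congr (g := fun x => 3/4 * (2 - x)^2)
      fun x hx => sqDistToSides_of_one_le (by rw [uIcc_of_le one_le_two] at hx; exact hx.1)]
    simp [intervalIntegral.integral_comp_sub_left (fun x => 3/4 * x^2), integral_pow]
    norm_num
  rw [← intervalIntegral.integral_add_adjacent_intervals
    (continuous_sqDistToSides.intervalIntegrable _ _)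
    (continuous_sqDistToSides.intervalIntegrable _ _), hleft, hright]
  norm_num

/-- Pythagoras: `3/4 x²` is the squared distance from `(x, 0)` to the line `y = √3 x`, and the
foot of the perpendicular has abscissa `x / 4`. -/
lemma sq_sub_add_sq_sqrt_three_mul (x t : ℝ) :
    (x - t)^2 + (Real.sqrt 3 * t)^2 = 3/4 * x^2 + (x - 4 * t)^2 / 4 := by
  rw [mul_pow, Real.sq_sqrt (by norm_num)]; ring

lemma sqDist_of_mem_S1 {p : ℝ × ℝ} (hp : p ∈ S1) (x : ℝ) :
    (x - p.1)^2 + p.2^2 = 3/4 * x^2 + (x - 4 * p.1)^2 / 4 := by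
  obtain ⟨t, -, -, rfl⟩ := hp
  exact sq_sub_add_sq_sqrt_three_mul x t

lemma sqDist_of_mem_S2 {p : ℝ × ℝ} (hp : p ∈ S2) (x : ℝ) :
    (x - p.1)^2 + p.2^2 = 3/4 * (2 - x)^2 + ((2 - x) - 4 * (2 - p.1))^2 / 4 := by
  obtain ⟨t, -, -, rfl⟩ := hp
  rw [← sq_sub_add_sq_sqrt_three_mul]; ring

lemma sqDistToSides_le_sqDist {p : ℝ × ℝ} (hp : p ∈ S1 ∪ S2) (x : ℝ) :
    sqDistToSides x ≤ (x - p.1)^2 + p.2^2 := by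
  rcases hp with hp | hp
  · rw [sqDist_of_mem_S1 hp, sqDistToSides]
    nlinarith [min_le_left (x^2) ((2 - x)^2), sq_nonneg (x - 4 * p.1)]
  · rw [sqDist_of_mem_S2 hp, sqDistToSides]
    nlinarith [min_le_right (x^2) ((2 - x)^2), sq_nonneg ((2 - x) - 4 * (2 - p.1))]

lemma sqDistToSides_add_le_sqDist {p : ℝ × ℝ} (hp : p ∈ S1 ∪ S2) {x r : ℝ}
    (hx : x ∈ Ioc (0:ℝ) (1/2)) (hr₀ : 0 ≤ r) (hr₁ : r ≤ 1) (hfar : r ≤ |x - 4 * p.1|) :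
    sqDistToSides x + r^2 / 4 ≤ (x - p.1)^2 + p.2^2 := by
  obtain ⟨hx0, hx1⟩ := hx
  rw [sqDistToSides_of_le_one (by linarith)]
  rcases hp with hp | hp
  · rw [sqDist_of_mem_S1 hp]
    have : r^2 ≤ (x - 4 * p.1)^2 := sq_abs (x - 4 * p.1) ▸ pow_le_pow_left₀ hr₀ hfar 2
    linarith
  · rw [sqDist_of_mem_S2 hp]
    nlinarith [sq_nonneg ((2 - x) - 4 * (2 - p.1))]

lemma sqDistToSides_le_minSqDist {α : Finset (ℝ × ℝ)} (hsub : ↑α ⊆ S1 ∪ S2) (hα : α.Nonempty)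
    (x : ℝ) : sqDistToSides x ≤ minSqDist α x := by
  rw [minSqDist_eq_inf' hα]
  exact Finset.le_inf' hα _ fun p hp => sqDistToSides_le_sqDist (hsub hp) x

lemma quarter_add_le_distortion {α : Finset (ℝ × ℝ)} (hsub : ↑α ⊆ S1 ∪ S2) (hα : α.Nonempty) :
    1/4 + (1/2) * ∫ x in (0:ℝ)..1/2, (minSqDist α x - sqDistToSides x) ≤ distortion α := by
  have hint : ∀ a b : ℝ, IntervalIntegrable (fun x => minSqDist α x - sqDistToSides x) volume a b :=
    fun a b => ((continuous_minSqDist hα).sub continuous_sqDistToSides).intervalIntegrable a b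
  have htail : 0 ≤ ∫ x in (1/2:ℝ)..2, (minSqDist α x - sqDistToSides x) :=
    intervalIntegral.integral_nonneg (by norm_num)
      fun x _ => sub_nonneg.2 (sqDistToSides_le_minSqDist hsub hα x)
  have hsplit : ∫ x in (0:ℝ)..2, minSqDist α x
      = 1/2 + ((∫ x in (0:ℝ)..1/2, (minSqDist α x - sqDistToSides x))
        + ∫ x in (1/2:ℝ)..2, (minSqDist α x - sqDistToSides x)) := by
    rw [intervalIntegral.integral_add_adjacent_intervals (hint _ _) (hint _ _),
      intervalIntegral.integral_sub ((continuous_minSqDist hα).intervalIntegrable _ _)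
        (continuous_sqDistToSides.intervalIntegrable _ _), integral_sqDistToSides]
    ring
  rw [distortion_eq_integral_minSqDist, hsplit]
  linarith

lemma quarter_add_le_distortion_of_card_le {α : Finset (ℝ × ℝ)} {n : ℕ} (hsub : ↑α ⊆ S1 ∪ S2)
    (hα : α.Nonempty) (hcard : α.card ≤ n) : 1/4 + 1/(2048 * (n:ℝ)^2) ≤ distortion α := by
  have hn : (1:ℝ) ≤ n := by exact_mod_cast hα.card_pos.trans_le hcard
  set B := α.image fun p => 4 * p.1
  set r : ℝ := 1/(8 * n) with hr
  have hr₀ : 0 ≤ r := by positivity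
  have hr₁ : r ≤ 1 := by rw [hr, div_le_one (by positivity)]; linarith
  have hmarkov := mul_sub_le_integral_of_le_off_balls B
    (f := fun x => minSqDist α x - sqDistToSides x)
    (a := 0) (b := 1/2) (ε := r^2/4) (by norm_num) (by positivity) hr₀
    (((continuous_minSqDist hα).sub continuous_sqDistToSides).intervalIntegrable _ _)
    (fun x _ => sub_nonneg.2 (sqDistToSides_le_minSqDist hsub hα x))
    (fun x hx hfar => by
      rw [le_sub_iff_add_le', minSqDist_eq_inf' hα]
      exact Finset.le_inf' hα _ fun p hp => sqDistToSides_add_le_sqDist (hsub hp) hx hr₀ hr₁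
        (hfar _ (Finset.mem_image_of_mem _ hp)))
  have hB : 2 * r * B.card ≤ 1/4 := by
    calc 2 * r * B.card ≤ 2 * r * n := by gcongr; exact_mod_cast Finset.card_image_le.trans hcard
      _ = 1/4 := by rw [hr]; field_simp; ring
  have hgain : 1/(1024 * (n:ℝ)^2) ≤ r^2/4 * (1/2 - 0 - 2 * r * B.card) := by
    calc 1/(1024 * (n:ℝ)^2) = r^2/4 * (1/4) := by rw [hr]; field_simp; ring
      _ ≤ _ := by gcongr; linarith
  have : 1/(2048 * (n:ℝ)^2) = 1/2 * (1/(1024 * (n:ℝ)^2)) := by field_simp; ring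
  linarith [quarter_add_le_distortion hsub hα]

/-- Abscissae of the points on each side: `4 t` runs through the midpoints of a partition of
`[0, 1]` into `k` equal cells. -/
noncomputable def grid (k : ℕ) : Finset ℝ :=
  (Finset.range k).image fun i : ℕ => (2 * (i:ℝ) + 1) / (8 * k)

lemma mem_Icc_of_mem_grid {k : ℕ} {t : ℝ} (ht : t ∈ grid k) : t ∈ Icc (0:ℝ) 1 := by
  obtain ⟨i, hi, rfl⟩ := Finset.mem_image.1 ht
  have hik : (i:ℝ) + 1 ≤ k := by exact_mod_cast Finset.mem_range.1 hi
  exact ⟨by positivity, by rw [div_le_one (by linarith)]; linarith⟩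

lemma exists_mem_grid_abs_sub_le {k : ℕ} (hk : 1 ≤ k) {y : ℝ} (hy₀ : 0 ≤ y) (hy₁ : y ≤ 1) :
    ∃ t ∈ grid k, |y - 4 * t| ≤ 1/(2 * k) := by
  obtain ⟨i, hi, hyi⟩ := exists_lt_abs_mul_sub_le hk hy₀ hy₁
  have hk₀ : (0:ℝ) < k := by exact_mod_cast hk
  refine ⟨_, Finset.mem_image_of_mem _ (Finset.mem_range.2 hi), ?_⟩
  have : y - 4 * ((2 * (i:ℝ) + 1) / (8 * k)) = (k * y - (i + 1/2)) / k := by field_simp; ring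
  rw [this, abs_div, abs_of_pos hk₀, div_le_div_iff₀ hk₀ (by positivity)]
  nlinarith

noncomputable def gridConfig (k : ℕ) : Finset (ℝ × ℝ) :=
  (grid k).image (fun t => (t, Real.sqrt 3 * t)) ∪
    (grid k).image (fun t => (2 - t, Real.sqrt 3 * t))

lemma gridConfig_subset (k : ℕ) : ↑(gridConfig k) ⊆ S1 ∪ S2 := by
  intro p hp
  simp only [gridConfig, Finset.coe_union, Finset.coe_image, mem_union, mem_image,
    Finset.mem_coe] at hp
  rcases hp with ⟨t, ht, rfl⟩ | ⟨t, ht, rfl⟩ <;> obtain ⟨ht₀, ht₁⟩ := mem_Icc_of_mem_grid ht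
  · exact Or.inl ⟨t, ht₀, ht₁, rfl⟩
  · exact Or.inr ⟨2 - t, by linarith, by linarith, by ring_nf⟩

lemma gridConfig_nonempty {k : ℕ} (hk : 1 ≤ k) : (gridConfig k).Nonempty :=
  (((Finset.nonempty_range_iff.2 (by omega)).image _).image _).mono Finset.subset_union_left

lemma card_gridConfig_le (k : ℕ) : (gridConfig k).card ≤ 2 * k := by
  calc (gridConfig k).card ≤ (grid k).card + (grid k).card :=
        (Finset.card_union_le _ _).trans (add_le_add Finset.card_image_le Finset.card_image_le)
    _ ≤ k + k := by
        gcongr <;> exact Finset.card_image_le.trans (Finset.card_range k).le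
    _ = 2 * k := by ring

lemma minSqDist_gridConfig_le {k : ℕ} (hk : 1 ≤ k) {x : ℝ} (hx : x ∈ Icc (0:ℝ) 2) :
    minSqDist (gridConfig k) x ≤ sqDistToSides x + 1/(16 * (k:ℝ)^2) := by
  have hk₀ : (0:ℝ) < k := by exact_mod_cast hk
  have hsq : ∀ y t : ℝ, |y - 4 * t| ≤ 1/(2 * k) → (y - 4 * t)^2 / 4 ≤ 1/(16 * (k:ℝ)^2) := by
    intro y t h
    have := pow_le_pow_left₀ (abs_nonneg _) h 2
    rw [sq_abs] at this
    calc (y - 4 * t)^2 / 4 ≤ (1/(2 * k))^2 / 4 := by gcongr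
      _ = 1/(16 * (k:ℝ)^2) := by field_simp; ring
  rw [minSqDist_eq_inf' (gridConfig_nonempty hk)]
  rcases le_total x 1 with hx₁ | hx₁
  · obtain ⟨t, ht, hxt⟩ := exists_mem_grid_abs_sub_le hk hx.1 hx₁
    have hmem : (t, Real.sqrt 3 * t) ∈ gridConfig k :=
      Finset.mem_union_left _ (Finset.mem_image_of_mem _ ht)
    calc _ ≤ (x - t)^2 + (Real.sqrt 3 * t)^2 := Finset.inf'_le _ hmem
      _ = sqDistToSides x + (x - 4 * t)^2 / 4 := by
          rw [sq_sub_add_sq_sqrt_three_mul, sqDistToSides_of_le_one hx₁]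
      _ ≤ _ := by linarith [hsq x t hxt]
  · obtain ⟨t, ht, hxt⟩ :=
      exists_mem_grid_abs_sub_le hk (y := 2 - x) (by linarith [hx.2]) (by linarith)
    have hmem : (2 - t, Real.sqrt 3 * t) ∈ gridConfig k :=
      Finset.mem_union_right _ (Finset.mem_image_of_mem _ ht)
    calc _ ≤ (x - (2 - t))^2 + (Real.sqrt 3 * t)^2 := Finset.inf'_le _ hmem
      _ = sqDistToSides x + ((2 - x) - 4 * t)^2 / 4 := by
          rw [sqDistToSides_of_one_le hx₁, ← sq_sub_add_sq_sqrt_three_mul]; ring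
      _ ≤ _ := by linarith [hsq (2 - x) t hxt]

lemma distortion_gridConfig_le {k : ℕ} (hk : 1 ≤ k) :
    distortion (gridConfig k) ≤ 1/4 + 1/(16 * (k:ℝ)^2) := by
  have hmono : ∫ x in (0:ℝ)..2, minSqDist (gridConfig k) x
      ≤ ∫ x in (0:ℝ)..2, (sqDistToSides x + 1/(16 * (k:ℝ)^2)) :=
    intervalIntegral.integral_mono_on (by norm_num)
      ((continuous_minSqDist (gridConfig_nonempty hk)).intervalIntegrable _ _)
      ((continuous_sqDistToSides.add continuous_const).intervalIntegrable _ _)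
      fun x hx => minSqDist_gridConfig_le hk hx
  rw [intervalIntegral.integral_add (continuous_sqDistToSides.intervalIntegrable _ _)
    intervalIntegrable_const, integral_sqDistToSides, intervalIntegral.integral_const,
    smul_eq_mul] at hmono
  rw [distortion_eq_integral_minSqDist]
  linarith

def admissibleErrors (n : ℕ) : Set ℝ :=
  {v | ∃ α : Finset (ℝ × ℝ), ↑α ⊆ S1 ∪ S2 ∧ 1 ≤ α.card ∧ α.card ≤ n ∧ v = distortion α}

lemma V_eq_sInf (n : ℕ) : V n = sInf (admissibleErrors n) := rfl

lemma bddBelow_admissibleErrors (n : ℕ) : BddBelow (admissibleErrors n) := by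
  refine ⟨1/4, ?_⟩
  rintro v ⟨α, hsub, hα, -, rfl⟩
  have := quarter_add_le_distortion_of_card_le hsub (Finset.card_pos.1 hα) le_rfl
  have : (0:ℝ) < 1/(2048 * (α.card:ℝ)^2) := by positivity
  linarith

lemma distortion_gridConfig_mem_admissibleErrors {n : ℕ} (hn : 2 ≤ n) :
    distortion (gridConfig (n / 2)) ∈ admissibleErrors n :=
  ⟨_, gridConfig_subset _, (gridConfig_nonempty (by omega)).card_pos,
    (card_gridConfig_le _).trans (by omega), rfl⟩

lemma V_sub_quarter_mem_Icc {n : ℕ} (hn : 2 ≤ n) :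
    V n - 1/4 ∈ Icc ((1/2048) / (n:ℝ)^2) (1 / (n:ℝ)^2) := by
  have hn' : (2:ℝ) ≤ n := by exact_mod_cast hn
  constructor
  · have : 1/4 + 1/(2048 * (n:ℝ)^2) ≤ V n :=
      le_csInf ⟨_, distortion_gridConfig_mem_admissibleErrors hn⟩
        fun v ⟨α, hsub, hα, hcard, hv⟩ =>
          hv ▸ quarter_add_le_distortion_of_card_le hsub (Finset.card_pos.1 hα) hcard
    rw [div_div]; linarith
  · have hV := (csInf_le (bddBelow_admissibleErrors n)
      (distortion_gridConfig_mem_admissibleErrors hn)).trans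
      (distortion_gridConfig_le (k := n / 2) (by omega))
    have hk : (n:ℝ) ≤ 4 * ((n / 2 : ℕ) : ℝ) := by exact_mod_cast (by omega : n ≤ 4 * (n / 2))
    have : 1/(16 * ((n / 2 : ℕ) : ℝ)^2) ≤ 1/(n:ℝ)^2 :=
      one_div_le_one_div_of_le (by positivity) (by nlinarith)
    rw [V_eq_sInf]; linarith

/-- The constrained quantization dimension exists and equals 1: with V_∞ = lim Vₙ = 1/4,
one has 2 log n / (−log(Vₙ − V_∞)) → 1. -/
theorem stmt18 :
    Filter.Tendsto V Filter.atTop (nhds (1/4 : ℝ)) ∧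
    Filter.Tendsto (fun n : ℕ => 2 * Real.log n / (-Real.log (V n - 1/4)))
      Filter.atTop (nhds (1 : ℝ)) := by
  have hV : ∀ᶠ n : ℕ in atTop, V n - 1/4 ∈ Icc ((1/2048) / (n:ℝ)^2) (1 / (n:ℝ)^2) :=
    (eventually_ge_atTop 2).mono fun _ => V_sub_quarter_mem_Icc
  refine ⟨?_, tendsto_two_mul_log_div_neg_log (by norm_num) hV⟩
  simpa using (tendsto_of_mem_Icc_div_sq hV).add_const (1/4 : ℝ)
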